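/- arXiv:2405.01968 — 7 statements merged into one kernel-verified Lean document; each statement's English description precedes it below -/
import Mathlib

section
/- In Euclidean space, let a, x, w be points with a ≠ x and w ≠ x. Then (‖a−x‖ − ‖a−w‖)/‖x−w‖ ≤ cos θ, where θ is the angle at x between the vectors a−x and w−x. -/
open scoped RealInnerProductSpace

/-- With `p = ‖u‖`, `q = ‖v‖`, `r = ‖u - v‖` and `⟪u, v⟫ = (p² + q² - r²) / 2`, this is
`(p - r)² ≤ q²`, i.e. the reverse triangle inequality. -/
theorem norm_mul_norm_sub_norm_sub_le_inner {E : Type*} [NormedAddCommGroup E]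
    [InnerProductSpace ℝ E] (u v : E) : ‖u‖ * (‖u‖ - ‖u - v‖) ≤ ⟪u, v⟫ := by
  have hcos : ‖u - v‖ ^ 2 = ‖u‖ ^ 2 - 2 * ⟪u, v⟫ + ‖v‖ ^ 2 := norm_sub_sq_real u v
  have hrev : |‖u‖ - ‖u - v‖| ≤ ‖v‖ := by simpa using abs_norm_sub_norm_le u (u - v)
  have hsq : (‖u‖ - ‖u - v‖) ^ 2 ≤ ‖v‖ ^ 2 := sq_le_sq' (abs_le.1 hrev).1 (abs_le.1 hrev).2
  nlinarith

theorem stmt_1_general {E : Type*} [NormedAddCommGroup E] [InnerProductSpace ℝ E]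
    (a x w : E) (hax : a ≠ x) :
    (‖a - x‖ - ‖a - w‖) / ‖x - w‖ ≤ ⟪a - x, w - x⟫ / (‖a - x‖ * ‖w - x‖) := by
  have hu : 0 < ‖a - x‖ := norm_pos_iff.2 (sub_ne_zero.2 hax)
  have key := norm_mul_norm_sub_norm_sub_le_inner (a - x) (w - x)
  rw [sub_sub_sub_cancel_right] at key
  calc (‖a - x‖ - ‖a - w‖) / ‖x - w‖
      = ‖a - x‖ * (‖a - x‖ - ‖a - w‖) / (‖a - x‖ * ‖w - x‖) := by
        rw [norm_sub_rev x w, mul_div_mul_left _ _ hu.ne']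
    _ ≤ ⟪a - x, w - x⟫ / (‖a - x‖ * ‖w - x‖) := by gcongr

theorem stmt_1 {E : Type*} [NormedAddCommGroup E] [InnerProductSpace ℝ E]
    (a x w : E) (hax : a ≠ x) (hwx : w ≠ x) :
    (‖a - x‖ - ‖a - w‖) / ‖x - w‖ ≤ ⟪a - x, w - x⟫ / (‖a - x‖ * ‖w - x‖) :=
  stmt_1_general a x w hax
end

section
/- Let z be the Euclidean nearest point to y in a closed convex set P ⊆ ℝⁿ, and let x ∈ P satisfy ⟪y−z, x−z⟫ = 0 with y ≠ x and z ≠ x. Then the vector v = (cos(∠yxz)/‖x−z‖)·(x−z), where cos(∠yxz) = ‖x−z‖/‖x−y‖, satisfies ⟪v, w−x⟫ ≤ ‖w−y‖ − ‖x−y‖ for all w ∈ P; i.e., v is a subgradient at x of the restriction to P of the distance function to y. -/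
/-!
Write `v = (x - z) / ‖x - y‖` and split `x - z = (x - y) + (y - z)`. The first summand is
`‖x - y‖` times a subgradient of `‖· - y‖` at `x`, by Cauchy–Schwarz. The second pairs
nonpositively with `w - x`: the variational inequality of the projection gives
`⟪y - z, w - z⟫ ≤ 0`, and `⟪y - z, x - z⟫ = 0`.
-/

open scoped RealInnerProductSpace

section

variable {F : Type*} [NormedAddCommGroup F] [InnerProductSpace ℝ F]

theorem real_inner_le_zero_of_forall_dist_le {K : Set F} (hK : Convex ℝ K) {y z : F}
    (hz : z ∈ K) (hmin : ∀ p ∈ K, dist y z ≤ dist y p) : ∀ w ∈ K, ⟪y - z, w - z⟫ ≤ 0 := by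
  have : Nonempty K := ⟨⟨z, hz⟩⟩
  rw [← norm_eq_iInf_iff_real_inner_le_zero hK hz]
  refine le_antisymm (le_ciInf fun p => by simpa [dist_eq_norm] using hmin p p.2) ?_
  have hbdd : BddBelow (Set.range fun p : K => ‖y - p‖) :=
    ⟨0, by rintro _ ⟨_, rfl⟩; exact norm_nonneg _⟩
  exact ciInf_le hbdd ⟨z, hz⟩

theorem real_inner_sub_le_norm_mul_sub_norm (x y w : F) :
    ⟪x - y, w - x⟫ ≤ ‖x - y‖ * (‖w - y‖ - ‖x - y‖) := by
  have hsplit : ⟪x - y, w - x⟫ = ⟪x - y, w - y⟫ - ‖x - y‖ ^ 2 := by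
    rw [← real_inner_self_eq_norm_sq, ← inner_sub_right, sub_sub_sub_cancel_right]
  rw [hsplit, mul_sub, sq]
  linarith [real_inner_le_norm (x - y) (w - y)]

theorem real_inner_sub_le_of_forall_dist_le {K : Set F} (hK : Convex ℝ K) {y z x : F}
    (hz : z ∈ K) (hmin : ∀ p ∈ K, dist y z ≤ dist y p) (hperp : ⟪y - z, x - z⟫ = 0)
    {w : F} (hw : w ∈ K) : ⟪x - z, w - x⟫ ≤ ‖x - y‖ * (‖w - y‖ - ‖x - y‖) := by
  have hyz : ⟪y - z, w - x⟫ ≤ 0 := by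
    have hwz := real_inner_le_zero_of_forall_dist_le hK hz hmin w hw
    rwa [← sub_sub_sub_cancel_right w x z, inner_sub_right, hperp, sub_zero]
  calc ⟪x - z, w - x⟫ = ⟪x - y, w - x⟫ + ⟪y - z, w - x⟫ := by
        rw [← inner_add_left, sub_add_sub_cancel]
    _ ≤ ‖x - y‖ * (‖w - y‖ - ‖x - y‖) := by
        linarith [real_inner_sub_le_norm_mul_sub_norm x y w]

theorem real_inner_inv_norm_smul_sub_le {K : Set F} (hK : Convex ℝ K) {y z x : F}
    (hz : z ∈ K) (hmin : ∀ p ∈ K, dist y z ≤ dist y p) (hperp : ⟪y - z, x - z⟫ = 0)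
    (hxy : x ≠ y) {w : F} (hw : w ∈ K) :
    ⟪‖x - y‖⁻¹ • (x - z), w - x⟫ ≤ ‖w - y‖ - ‖x - y‖ := by
  have hpos : 0 < ‖x - y‖ := norm_sub_pos_iff.2 hxy
  rw [real_inner_smul_left, inv_mul_le_iff₀ hpos]
  exact real_inner_sub_le_of_forall_dist_le hK hz hmin hperp hw

end

theorem stmt_3_general {n : ℕ} (P : Set (EuclideanSpace ℝ (Fin n)))
    (hPconv : Convex ℝ P)
    (y z x : EuclideanSpace ℝ (Fin n))
    (hzP : z ∈ P) (hproj : ∀ p ∈ P, dist y z ≤ dist y p)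
    (hperp : ⟪y - z, x - z⟫ = 0) (hyx : y ≠ x) (hzx : z ≠ x) :
    ∀ w ∈ P, ⟪((‖x - z‖ / ‖x - y‖) / ‖x - z‖) • (x - z), w - x⟫ ≤ ‖w - y‖ - ‖x - y‖ := by
  intro w hw
  have hcoeff : (‖x - z‖ / ‖x - y‖) / ‖x - z‖ = ‖x - y‖⁻¹ :=
    div_div_cancel_left' (norm_sub_pos_iff.2 hzx.symm).ne'
  rw [hcoeff]
  exact real_inner_inv_norm_smul_sub_le hPconv hzP hproj hperp hyx.symm hw

theorem stmt_3 {n : ℕ} (P : Set (EuclideanSpace ℝ (Fin n))) (hP : P.Nonempty)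
    (hPc : IsClosed P) (hPconv : Convex ℝ P)
    (y z x : EuclideanSpace ℝ (Fin n)) (hyP : y ∉ P)
    (hzP : z ∈ P) (hproj : ∀ p ∈ P, dist y z ≤ dist y p)
    (hxP : x ∈ P) (hperp : ⟪y - z, x - z⟫ = 0) (hyx : y ≠ x) (hzx : z ≠ x) :
    ∀ w ∈ P, ⟪((‖x - z‖ / ‖x - y‖) / ‖x - z‖) • (x - z), w - x⟫ ≤ ‖w - y‖ - ‖x - y‖ :=
  stmt_3_general P hPconv y z x hzP hproj hperp hyx hzx
end

section
/- In the 3-spider (three copies of [0,1] glued at 0), let a¹, a², a³ be points with aⁱ in the interior of the i-th leg, at distances α₁, α₂, α₃ ∈ (0,1) from the origin, satisfying αᵢ < Σ_{j≠i} αⱼ for each i. Then the origin is the unique minimizer over the 3-spider of the sum of squared distances to the three points; i.e., the Fréchet mean of {a¹,a²,a³} is the origin. -/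
/-- Distance in the 3-spider: legs indexed by `Fin 3`, glued at the origin. -/
noncomputable def spiderDist (p q : Fin 3 × ℝ) : ℝ :=
  if p.1 = q.1 then |p.2 - q.2| else p.2 + q.2

theorem stmt_6 (α : Fin 3 → ℝ) (hα : ∀ i, α i ∈ Set.Ioo (0:ℝ) 1)
    (hsticky : ∀ i, α i < ∑ j ∈ Finset.univ.erase i, α j) :
    ∀ i : Fin 3, ∀ s : ℝ, 0 < s → s ≤ 1 →
      (∑ j : Fin 3, (α j) ^ 2) < ∑ j : Fin 3, spiderDist (i, s) (j, α j) ^ 2 := by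
  intro i s hs hs1
  have h := hsticky i
  rw [Finset.sum_erase_eq_sub (Finset.mem_univ i), Fin.sum_univ_three] at h
  have habs : |s - α i| ^ 2 = (s - α i) ^ 2 := sq_abs _
  fin_cases i <;>
    simp only [spiderDist, Fin.sum_univ_three, Fin.isValue, Fin.mk_zero, Fin.mk_one, Fin.reduceFinMk] at h habs ⊢ <;>
    norm_num [Fin.ext_iff, sq_abs] at h habs ⊢ <;> nlinarith [sq_nonneg s]
end

section
/- In the open book consisting of three copies of [0,1]² glued along the edge {0}×[0,1], let aⁱ = (α_i, β_i) lie in the interior of the i-th page (α_i ∈ (0,1)) with αᵢ < Σ_{j≠i} αⱼ for each i. Then the point (0, (β₁+β₂+β₃)/3) on the spine is the unique minimizer of the sum of squared distances to the three points. -/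
/-!
Seen from page `i`, a point `aʲ` on another page sits at abscissa `-αⱼ`, so the cost at `(i, s, t)`
is a quadratic in `(s, t)`: it equals the cost at `(0, m)`, `m` the mean of the `βⱼ`, plus
`3 s² + 2 s (∑_{j ≠ i} αⱼ - αᵢ) + 3 (t - m)²`. The hypothesis on the `α` makes the linear
coefficient positive, so for `s ≥ 0` the excess vanishes only at `(0, m)`.
-/

/-- Distance in the open book: three pages `[0,1]²` indexed by `Fin 3`,
glued along the spine `{0} × [0,1]`. -/
noncomputable def bookDist (p q : Fin 3 × ℝ × ℝ) : ℝ :=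
  if p.1 = q.1 then Real.sqrt ((p.2.1 - q.2.1) ^ 2 + (p.2.2 - q.2.2) ^ 2)
  else Real.sqrt ((p.2.1 + q.2.1) ^ 2 + (p.2.2 - q.2.2) ^ 2)

open Finset

lemma bookDist_sq (p q : Fin 3 × ℝ × ℝ) :
    bookDist p q ^ 2 =
      (if p.1 = q.1 then (p.2.1 - q.2.1) ^ 2 else (p.2.1 + q.2.1) ^ 2) + (p.2.2 - q.2.2) ^ 2 := by
  unfold bookDist
  split_ifs <;> exact Real.sq_sqrt (by positivity)

section

variable {ι : Type*} [Fintype ι]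

lemma sum_sq_sub_eq_card_mul_sq_add (β : ι → ℝ) {m : ℝ} (hm : Fintype.card ι * m = ∑ j, β j)
    (t : ℝ) :
    ∑ j, (t - β j) ^ 2 = Fintype.card ι * (t - m) ^ 2 + ∑ j, (m - β j) ^ 2 := by
  have hsplit : ∀ j, (t - β j) ^ 2 = (t - m) ^ 2 + 2 * (t - m) * (m - β j) + (m - β j) ^ 2 :=
    fun j => by ring
  simp only [hsplit, sum_add_distrib, ← mul_sum, sum_sub_distrib, sum_const, card_univ,
    nsmul_eq_mul, hm, sub_self, mul_zero, add_zero]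

lemma sum_ite_sub_sq_add_sq [DecidableEq ι] (α : ι → ℝ) (i : ι) (s : ℝ) :
    ∑ j, (if i = j then (s - α j) ^ 2 else (s + α j) ^ 2) =
      Fintype.card ι * s ^ 2 + 2 * s * (∑ j ∈ univ.erase i, α j - α i) + ∑ j, α j ^ 2 := by
  have hsplit : ∀ j, (if i = j then (s - α j) ^ 2 else (s + α j) ^ 2) =
      s ^ 2 + 2 * s * α j + α j ^ 2 - if i = j then 4 * s * α j else 0 :=
    fun j => by split_ifs <;> ring
  simp only [hsplit, sum_sub_distrib, sum_add_distrib, ← mul_sum, sum_ite_eq, mem_univ, if_true,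
    sum_const, card_univ, nsmul_eq_mul, sum_erase_eq_sub (mem_univ i)]
  ring

end

theorem stmt_7_general (α β : Fin 3 → ℝ)
    (hsticky : ∀ i, α i < ∑ j ∈ Finset.univ.erase i, α j) :
    ∀ i : Fin 3, ∀ s t : ℝ, 0 ≤ s → s ≤ 1 → 0 ≤ t → t ≤ 1 →
      ¬(s = 0 ∧ t = (β 0 + β 1 + β 2) / 3) →
      (∑ j : Fin 3, bookDist (i, 0, (β 0 + β 1 + β 2) / 3) (j, α j, β j) ^ 2) <
        ∑ j : Fin 3, bookDist (i, s, t) (j, α j, β j) ^ 2 := by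
  intro i s t hs _ _ _ hne
  set m := (β 0 + β 1 + β 2) / 3
  have hm : Fintype.card (Fin 3) * m = ∑ j, β j := by
    simp only [Fintype.card_fin, Nat.cast_ofNat, Fin.sum_univ_three, m]
    ring
  have hcost : ∀ s t, ∑ j, bookDist (i, s, t) (j, α j, β j) ^ 2 =
      3 * s ^ 2 + 2 * s * (∑ j ∈ univ.erase i, α j - α i) + 3 * (t - m) ^ 2 +
        (∑ j, α j ^ 2 + ∑ j, (m - β j) ^ 2) := by
    intro s t
    simp only [bookDist_sq, sum_add_distrib, sum_ite_sub_sq_add_sq, Fintype.card_fin]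
    rw [sum_sq_sub_eq_card_mul_sq_add β hm, Fintype.card_fin]
    push_cast
    ring
  rw [hcost, hcost]
  have hgap := sub_pos.2 (hsticky i)
  rcases hs.eq_or_lt with rfl | hs
  · have htm : t - m ≠ 0 := sub_ne_zero.2 fun ht => hne ⟨rfl, ht⟩
    linarith [pow_two_pos_of_ne_zero htm]
  · nlinarith [sq_nonneg (t - m), mul_pos hs hgap]

theorem stmt_7 (α β : Fin 3 → ℝ) (hα : ∀ i, α i ∈ Set.Ioo (0:ℝ) 1)
    (hβ : ∀ i, β i ∈ Set.Icc (0:ℝ) 1)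
    (hsticky : ∀ i, α i < ∑ j ∈ Finset.univ.erase i, α j) :
    ∀ i : Fin 3, ∀ s t : ℝ, 0 ≤ s → s ≤ 1 → 0 ≤ t → t ≤ 1 →
      ¬(s = 0 ∧ t = (β 0 + β 1 + β 2) / 3) →
      (∑ j : Fin 3, bookDist (i, 0, (β 0 + β 1 + β 2) / 3) (j, α j, β j) ^ 2) <
        ∑ j : Fin 3, bookDist (i, s, t) (j, α j, β j) ^ 2 :=
  stmt_7_general α β hsticky
end

section
/- The function w ↦ √(‖w−p‖² + s²) + √(‖w−q‖² + t²) on ℝᵏ, for fixed p, q ∈ ℝᵏ and s, t > 0, attains its minimum value √(‖p−q‖² + (s+t)²). -/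
/-!
The lower bound is the triangle inequality twice: once in the space, `‖p - q‖ ≤ ‖w - p‖ + ‖w - q‖`,
and once in the Euclidean plane for the vectors `(‖w - p‖, s)` and `(‖w - q‖, t)`. Equality is
attained at the point dividing the segment from `p` to `q` in the ratio `s : t`, where both legs
are the same right triangle scaled by `s / (s + t)` and `t / (s + t)`.
-/

open Real

lemma sqrt_add_sq_add_add_sq_le (a b s t : ℝ) :
    √((a + b) ^ 2 + (s + t) ^ 2) ≤ √(a ^ 2 + s ^ 2) + √(b ^ 2 + t ^ 2) := by
  have hnorm : ∀ x y : ℝ, √(x ^ 2 + y ^ 2) = ‖(⟨x, y⟩ : ℂ)‖ := fun x y => by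
    rw [Complex.norm_def, Complex.normSq_mk]
    ring_nf
  rw [hnorm, hnorm, hnorm]
  exact norm_add_le (⟨a, s⟩ : ℂ) ⟨b, t⟩

lemma sqrt_mul_sq_add_mul_sq {c : ℝ} (hc : 0 ≤ c) (x y : ℝ) :
    √((c * x) ^ 2 + (c * y) ^ 2) = c * √(x ^ 2 + y ^ 2) := by
  rw [mul_pow, mul_pow, ← mul_add, sqrt_mul (sq_nonneg c), sqrt_sq hc]

lemma sqrt_norm_sub_sq_add_sq_le {E : Type*} [SeminormedAddCommGroup E] (p q w : E) (s t : ℝ) :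
    √(‖p - q‖ ^ 2 + (s + t) ^ 2) ≤ √(‖w - p‖ ^ 2 + s ^ 2) + √(‖w - q‖ ^ 2 + t ^ 2) := by
  have htri : ‖p - q‖ ≤ ‖w - p‖ + ‖w - q‖ := by
    simpa only [norm_sub_rev w p] using norm_sub_le_norm_sub_add_norm_sub p w q
  calc √(‖p - q‖ ^ 2 + (s + t) ^ 2)
      ≤ √((‖w - p‖ + ‖w - q‖) ^ 2 + (s + t) ^ 2) := by
        gcongr
    _ ≤ √(‖w - p‖ ^ 2 + s ^ 2) + √(‖w - q‖ ^ 2 + t ^ 2) :=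
        sqrt_add_sq_add_add_sq_le _ _ _ _

lemma sqrt_norm_lineMap_sub_sq_add_sq {E : Type*} [SeminormedAddCommGroup E] [NormedSpace ℝ E]
    (p q : E) {s t : ℝ} (hs : 0 ≤ s) (ht : 0 ≤ t) :
    let w := AffineMap.lineMap p q (s / (s + t))
    √(‖w - p‖ ^ 2 + s ^ 2) + √(‖w - q‖ ^ 2 + t ^ 2) = √(‖p - q‖ ^ 2 + (s + t) ^ 2) := by
  intro w
  set c := s / (s + t)
  have hc : 0 ≤ c := by positivity
  have hc' : 0 ≤ 1 - c := sub_nonneg.2 (div_le_one_of_le₀ (by linarith) (by linarith))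
  -- the quotient `c` is junk when `s + t = 0`, but then `s = t = 0` and both identities still hold
  have hs' : s = c * (s + t) := by
    rcases (add_nonneg hs ht).eq_or_lt with h | h
    · simp only [← h, mul_zero]; linarith
    · exact (div_mul_cancel₀ s h.ne').symm
  have ht' : t = (1 - c) * (s + t) := by linear_combination -hs'
  have hwp : ‖w - p‖ = c * ‖p - q‖ := by
    rw [← vsub_eq_sub, AffineMap.lineMap_vsub_left, vsub_eq_sub, norm_smul_of_nonneg hc,
      norm_sub_rev]
  have hwq : ‖w - q‖ = (1 - c) * ‖p - q‖ := by
    rw [← vsub_eq_sub, AffineMap.lineMap_vsub_right, vsub_eq_sub, norm_smul_of_nonneg hc']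
  calc √(‖w - p‖ ^ 2 + s ^ 2) + √(‖w - q‖ ^ 2 + t ^ 2)
      = c * √(‖p - q‖ ^ 2 + (s + t) ^ 2) + (1 - c) * √(‖p - q‖ ^ 2 + (s + t) ^ 2) := by
        rw [← sqrt_mul_sq_add_mul_sq hc, ← sqrt_mul_sq_add_mul_sq hc', ← hs', ← ht', hwp, hwq]
    _ = √(‖p - q‖ ^ 2 + (s + t) ^ 2) := by ring

theorem stmt_9 {k : ℕ} (p q : EuclideanSpace ℝ (Fin k)) (s t : ℝ)
    (hs : 0 < s) (ht : 0 < t) :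
    IsLeast (Set.range fun w : EuclideanSpace ℝ (Fin k) =>
        Real.sqrt (‖w - p‖ ^ 2 + s ^ 2) + Real.sqrt (‖w - q‖ ^ 2 + t ^ 2))
      (Real.sqrt (‖p - q‖ ^ 2 + (s + t) ^ 2)) := by
  refine ⟨⟨_, sqrt_norm_lineMap_sub_sq_add_sq p q hs.le ht.le⟩, ?_⟩
  rintro _ ⟨w, rfl⟩
  exact sqrt_norm_sub_sq_add_sq_le p q w s t
end

section
/- In the metric space X = {x ∈ [−1,1]² : x₁ ≤ 0 or x₂ ≤ 0} ⊆ ℝ² with the induced length (shortest-path) metric, the Fréchet mean of the three points e₁ = (1,0), e₂ = (0,1), and −e₁ = (−1,0) is the point (−α, α) with α = (2−√2)/6; that is, this point uniquely minimizes the sum of squared path-distances to the three points. -/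
open scoped ENNReal
/-- Intrinsic (shortest-path) distance inside a subset `X` of a Euclidean space,
as the infimum of lengths (total variations) of continuous paths in `X`. -/
noncomputable def pathDist {E : Type*} [NormedAddCommGroup E] [InnerProductSpace ℝ E]
    (X : Set E) (x y : E) : ℝ≥0∞ :=
  ⨅ (γ : ℝ → E) (_ : ContinuousOn γ (Set.Icc 0 1)) (_ : γ 0 = x) (_ : γ 1 = y)
    (_ : ∀ t ∈ Set.Icc (0:ℝ) 1, γ t ∈ X), eVariationOn γ (Set.Icc 0 1)

/-!
At a point `x` with `x₂ ≤ 0` the Euclidean distances alone give a sum of squares `≥ 3`. A path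
from a point with `x₁ ≤ 0 < x₂` to `e₁` has to cross the non-positive `x₂`-axis, so its length
is at least `‖x‖ + 1`. Together with `2‖x‖ ≥ √2 (x₂ - x₁)` and `√2 = 2 - 6α` this bounds the
sum of squares below by `3 - 6α² + 3/2 ((x₁ + x₂)² + (x₂ - x₁ - 2α)²)`. At `(-α, α)` the
segments to `e₂`, `-e₁` and the broken line through the origin to `e₁` attain `3 - 6α²`.
-/

open Set

theorem edist_add_edist_le_eVariationOn {α E : Type*} [LinearOrder α] [PseudoEMetricSpace E]
    (f : α → E) {a b c : α} (hb : b ∈ Icc a c) :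
    edist (f a) (f b) + edist (f b) (f c) ≤ eVariationOn f (Icc a c) := by
  have hsplit := eVariationOn.Icc_add_Icc f hb.1 hb.2 (mem_univ b)
  simp only [univ_inter] at hsplit
  rw [← hsplit]
  gcongr <;> apply eVariationOn.edist_le <;> simp [hb.1, hb.2]

theorem exists_mem_Icc_eq_zero_and_nonpos {f g : ℝ → ℝ} {a b : ℝ} (hab : a ≤ b)
    (hf : ContinuousOn f (Icc a b)) (hg : ContinuousOn g (Icc a b)) (ha : f a ≤ 0) (hb : 0 < f b)
    (hfg : ∀ t ∈ Icc a b, f t ≤ 0 ∨ g t ≤ 0) : ∃ s ∈ Icc a b, f s = 0 ∧ g s ≤ 0 := by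
  -- `s` is the last time with `f ≤ 0`; after it `f > 0`, so `g ≤ 0`, and both pass to `s`.
  set A := Icc a b ∩ f ⁻¹' Iic 0
  have hbdd : BddAbove A := bddAbove_Icc.mono inter_subset_left
  have hsA : sSup A ∈ A := (hf.preimage_isClosed_of_isClosed isClosed_Icc isClosed_Iic).csSup_mem
    ⟨a, left_mem_Icc.2 hab, ha⟩ hbdd
  set s := sSup A
  have hsb : s < b := hsA.1.2.lt_of_ne fun h => (h ▸ hsA.2 : f b ≤ 0).not_gt hb
  have hpos : ∀ t ∈ Ioc s b, 0 < f t := fun t ht => not_le.1 fun h =>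
    ht.1.not_ge (le_csSup hbdd ⟨⟨hsA.1.1.trans ht.1.le, ht.2⟩, h⟩)
  have nonpos_at_s : ∀ h : ℝ → ℝ, ContinuousOn h (Icc a b) → (∀ t ∈ Ioc s b, h t ≤ 0) →
      h s ≤ 0 := by
    intro h hh hs
    have hclosed : IsClosed (Icc s b ∩ h ⁻¹' Iic 0) :=
      (hh.mono (Icc_subset_Icc_left hsA.1.1)).preimage_isClosed_of_isClosed isClosed_Icc
        isClosed_Iic
    have : closure (Ioc s b) ⊆ Icc s b ∩ h ⁻¹' Iic 0 :=
      closure_minimal (fun t ht => ⟨Ioc_subset_Icc_self ht, hs t ht⟩) hclosed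
    rw [closure_Ioc hsb.ne] at this
    exact (this (left_mem_Icc.2 hsb.le)).2
  refine ⟨s, hsA.1, le_antisymm hsA.2 ?_, nonpos_at_s g hg fun t ht => ?_⟩
  · simpa using nonpos_at_s (fun t => -f t) hf.neg fun t ht => neg_nonpos.2 (hpos t ht).le
  · exact (hfg t ⟨hsA.1.1.trans ht.1.le, ht.2⟩).resolve_left (hpos t ht).not_ge

theorem ENNReal.ofReal_sq_add_sq_add_sq {a b c : ℝ} (ha : 0 ≤ a) (hb : 0 ≤ b) (hc : 0 ≤ c) :
    ENNReal.ofReal (a ^ 2 + b ^ 2 + c ^ 2) =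
      ENNReal.ofReal a ^ 2 + ENNReal.ofReal b ^ 2 + ENNReal.ofReal c ^ 2 := by
  rw [ENNReal.ofReal_add (by positivity) (by positivity), ENNReal.ofReal_add (by positivity)
    (by positivity), ENNReal.ofReal_pow ha, ENNReal.ofReal_pow hb, ENNReal.ofReal_pow hc]

section PathDist

variable {E : Type*} [NormedAddCommGroup E] [InnerProductSpace ℝ E] {X : Set E} {x y z : E}

theorem edist_le_pathDist : edist x y ≤ pathDist X x y :=
  le_iInf fun γ => le_iInf fun _ => le_iInf fun h0 => le_iInf fun h1 => le_iInf fun _ =>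
    h0 ▸ h1 ▸ eVariationOn.edist_le γ (left_mem_Icc.2 zero_le_one) (right_mem_Icc.2 zero_le_one)

theorem pathDist_le_eVariationOn {γ : ℝ → E} (hγ : ContinuousOn γ (Icc 0 1)) (h0 : γ 0 = x)
    (h1 : γ 1 = y) (hγX : ∀ t ∈ Icc (0 : ℝ) 1, γ t ∈ X) :
    pathDist X x y ≤ eVariationOn γ (Icc 0 1) :=
  iInf_le_of_le γ <| iInf_le_of_le hγ <| iInf_le_of_le h0 <| iInf_le_of_le h1 <| iInf_le _ hγX

theorem pathDist_le_edist (h : segment ℝ x y ⊆ X) : pathDist X x y ≤ edist x y := by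
  have hL := lipschitzWith_lineMap (𝕜 := ℝ) x y
  refine (pathDist_le_eVariationOn hL.continuous.continuousOn (AffineMap.lineMap_apply_zero _ _)
    (AffineMap.lineMap_apply_one _ _)
    fun t ht => h (segment_eq_image_lineMap ℝ x y ▸ mem_image_of_mem _ ht)).trans ?_
  calc eVariationOn (AffineMap.lineMap x y) (Icc (0 : ℝ) 1)
      ≤ nndist x y * eVariationOn id (Icc (0 : ℝ) 1) :=
        (hL.lipschitzOnWith (s := univ)).comp_eVariationOn_le (mapsTo_univ _ _)
    _ = edist x y := by
        have := (monotoneOn_id (s := Icc (0 : ℝ) 1)).eVariationOn_eq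
          (left_mem_Icc.2 zero_le_one) (right_mem_Icc.2 zero_le_one)
        rw [inter_self] at this
        rw [this, edist_nndist]
        simp

theorem pathDist_triangle : pathDist X x z ≤ pathDist X x y + pathDist X y z := by
  simp only [pathDist, ENNReal.iInf_add, ENNReal.add_iInf, le_iInf_iff]
  intro γ₂ hγ₂ h0₂ h1₂ hX₂ γ₁ hγ₁ h0₁ h1₁ hX₁
  set γ : ℝ → E := fun t => if t ≤ 1 / 2 then γ₁ (2 * t) else γ₂ (2 * t - 1)
  have hmaps₁ : MapsTo (fun t : ℝ => 2 * t) (Icc 0 (1 / 2)) (Icc 0 1) :=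
    fun t ht => ⟨by linarith [ht.1], by linarith [ht.2]⟩
  have hmaps₂ : MapsTo (fun t : ℝ => 2 * t - 1) (Icc (1 / 2) 1) (Icc 0 1) :=
    fun t ht => ⟨by linarith [ht.1], by linarith [ht.2]⟩
  have heq₁ : EqOn γ (γ₁ ∘ fun t => 2 * t) (Icc 0 (1 / 2)) := fun t ht => if_pos ht.2
  have heq₂ : EqOn γ (γ₂ ∘ fun t => 2 * t - 1) (Icc (1 / 2) 1) := by
    intro t ht
    rcases ht.1.eq_or_lt with rfl | h
    · norm_num [γ, h0₂, h1₁]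
    · exact if_neg (not_le.2 h)
  have hcont : ContinuousOn γ (Icc 0 1) := by
    rw [← Icc_union_Icc_eq_Icc (by norm_num : (0 : ℝ) ≤ 1 / 2) (by norm_num)]
    refine ContinuousOn.union_of_isClosed ?_ ?_ isClosed_Icc isClosed_Icc
    · exact (hγ₁.comp (by fun_prop) hmaps₁).congr heq₁
    · exact (hγ₂.comp (by fun_prop) hmaps₂).congr heq₂
  refine (pathDist_le_eVariationOn hcont (by simp [γ, h0₁]) (by norm_num [γ, h1₂]) ?_).trans ?_
  · intro t ht
    by_cases h : t ≤ 1 / 2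
    · exact heq₁ ⟨ht.1, h⟩ ▸ hX₁ _ (hmaps₁ ⟨ht.1, h⟩)
    · exact heq₂ ⟨(not_le.1 h).le, ht.2⟩ ▸ hX₂ _ (hmaps₂ ⟨(not_le.1 h).le, ht.2⟩)
  · have hsplit := eVariationOn.Icc_add_Icc γ (by norm_num : (0 : ℝ) ≤ 1 / 2)
      (by norm_num : (1 / 2 : ℝ) ≤ 1) (mem_univ _)
    simp only [univ_inter] at hsplit
    rw [← hsplit, eVariationOn.eq_of_eqOn heq₁, eVariationOn.eq_of_eqOn heq₂]
    gcongr
    · exact eVariationOn.comp_le_of_monotoneOn _ _ (by intro a _ b _ h; dsimp; linarith) hmaps₁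
    · exact eVariationOn.comp_le_of_monotoneOn _ _ (by intro a _ b _ h; dsimp; linarith) hmaps₂

theorem pathDist_le_edist_of_convex {C : Set E} (hC : Convex ℝ C) (hCX : C ⊆ X) (hx : x ∈ C)
    (hy : y ∈ C) : pathDist X x y ≤ edist x y :=
  pathDist_le_edist ((hC.segment_subset hx hy).trans hCX)

end PathDist

noncomputable section

local notation "ℝ²" => EuclideanSpace ℝ (Fin 2)

def pt (a b : ℝ) : ℝ² := WithLp.toLp 2 (fun i => if i = 0 then a else b)

@[simp] theorem pt_apply_zero (a b : ℝ) : pt a b 0 = a := rfl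
@[simp] theorem pt_apply_one (a b : ℝ) : pt a b 1 = b := rfl

theorem neg_pt (a b : ℝ) : -pt a b = pt (-a) (-b) := by
  ext i; fin_cases i <;> rfl

theorem dist_sq_eq_fin_two (p q : ℝ²) : dist p q ^ 2 = (p 0 - q 0) ^ 2 + (p 1 - q 1) ^ 2 := by
  rw [EuclideanSpace.dist_eq, Real.sq_sqrt (by positivity)]
  simp [Fin.sum_univ_two, Real.dist_eq, sq_abs]

theorem norm_sq_eq_fin_two (p : ℝ²) : ‖p‖ ^ 2 = p 0 ^ 2 + p 1 ^ 2 := by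
  simpa using dist_sq_eq_fin_two p 0

theorem norm_pt (a b : ℝ) : ‖pt a b‖ = √(a ^ 2 + b ^ 2) := by
  rw [← Real.sqrt_sq (norm_nonneg (pt a b)), norm_sq_eq_fin_two]
  rfl

def rect (a b c d : ℝ) : Set ℝ² := {p | p 0 ∈ Icc a b ∧ p 1 ∈ Icc c d}

theorem convex_rect (a b c d : ℝ) : Convex ℝ (rect a b c d) :=
  ((convex_Icc a b).linear_preimage (EuclideanSpace.proj (0 : Fin 2)).toLinearMap).inter
    ((convex_Icc c d).linear_preimage (EuclideanSpace.proj (1 : Fin 2)).toLinearMap)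

def Lshape : Set ℝ² := {p | |p 0| ≤ 1 ∧ |p 1| ≤ 1 ∧ (p 0 ≤ 0 ∨ p 1 ≤ 0)}

theorem rect_left_subset_Lshape : rect (-1) 0 (-1) 1 ⊆ Lshape :=
  fun _ ⟨⟨h₁, h₂⟩, h₃⟩ => ⟨abs_le.2 ⟨h₁, by linarith⟩, abs_le.2 h₃, Or.inl h₂⟩

theorem rect_bottom_subset_Lshape : rect (-1) 1 (-1) 0 ⊆ Lshape :=
  fun _ ⟨h₁, h₂, h₃⟩ => ⟨abs_le.2 h₁, abs_le.2 ⟨h₂, by linarith⟩, Or.inr h₃⟩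

theorem ofReal_norm_add_le_pathDist {X : Set ℝ²} (hX : X ⊆ {p | p 0 ≤ 0 ∨ p 1 ≤ 0}) {x y : ℝ²}
    (hx₀ : x 0 ≤ 0) (hx₁ : 0 ≤ x 1) (hy : 0 < y 0) :
    ENNReal.ofReal (‖x‖ + y 0) ≤ pathDist X x y := by
  refine le_iInf fun γ => le_iInf fun hγ => le_iInf fun h0 => le_iInf fun h1 =>
    le_iInf fun hγX => ?_
  obtain ⟨s, hs, hs₀, hs₁⟩ := exists_mem_Icc_eq_zero_and_nonpos (f := fun t => γ t 0)
    (g := fun t => γ t 1) zero_le_one ((EuclideanSpace.proj 0).continuous.comp_continuousOn hγ)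
    ((EuclideanSpace.proj 1).continuous.comp_continuousOn hγ)
    (by simpa [h0] using hx₀) (by simpa [h1] using hy) fun t ht => hX (hγX t ht)
  have hx : ‖x‖ ≤ dist x (γ s) := by
    rw [← pow_le_pow_iff_left₀ (norm_nonneg _) dist_nonneg two_ne_zero, norm_sq_eq_fin_two,
      dist_sq_eq_fin_two]
    nlinarith
  have hy : y 0 ≤ dist (γ s) y := by
    simpa [hs₀, abs_of_pos hy, Real.dist_eq] using PiLp.dist_apply_le (γ s) y 0
  calc ENNReal.ofReal (‖x‖ + y 0) ≤ edist x (γ s) + edist (γ s) y := by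
        rw [edist_dist, edist_dist, ← ENNReal.ofReal_add dist_nonneg dist_nonneg]
        exact ENNReal.ofReal_le_ofReal (add_le_add hx hy)
    _ ≤ eVariationOn γ (Icc 0 1) := h0 ▸ h1 ▸ edist_add_edist_le_eVariationOn γ hs

def frechetCoord : ℝ := (2 - √2) / 6

theorem two_sub_six_mul_frechetCoord : 2 - 6 * frechetCoord = √2 := by
  unfold frechetCoord; ring

theorem frechetCoord_pos : 0 < frechetCoord := by
  have : √2 < 2 := (Real.sqrt_lt' two_pos).2 (by norm_num)
  unfold frechetCoord; linarith

theorem frechetCoord_le_one : frechetCoord ≤ 1 := by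
  have := Real.sqrt_nonneg 2
  unfold frechetCoord; linarith

def frechetMean : ℝ² := pt (-frechetCoord) frechetCoord

def frechetSum (x : ℝ²) : ℝ≥0∞ :=
  pathDist Lshape x (pt 1 0) ^ 2 + pathDist Lshape x (pt 0 1) ^ 2 + pathDist Lshape x (-pt 1 0) ^ 2

theorem frechetSum_frechetMean_le :
    frechetSum frechetMean ≤ ENNReal.ofReal (3 - 6 * frechetCoord ^ 2) := by
  have hα₀ := frechetCoord_pos
  have hsqrt := two_sub_six_mul_frechetCoord
  set α := frechetCoord
  set c := frechetMean
  have hc : c ∈ rect (-1) 0 (-1) 1 := by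
    refine ⟨⟨?_, ?_⟩, ?_, frechetCoord_le_one⟩ <;>
      simp only [c, frechetMean, pt_apply_zero, pt_apply_one] <;> linarith [frechetCoord_le_one]
  have hc₀ : ‖c‖ = √2 * α := by
    rw [show c = pt (-α) α from rfl, norm_pt, show (-α) ^ 2 + α ^ 2 = 2 * α ^ 2 by ring,
      Real.sqrt_mul zero_le_two, Real.sqrt_sq hα₀.le]
  have h₁ : pathDist Lshape c (pt 1 0) ≤ ENNReal.ofReal (‖c‖ + 1) :=
    calc pathDist Lshape c (pt 1 0) ≤ pathDist Lshape c 0 + pathDist Lshape 0 (pt 1 0) :=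
          pathDist_triangle
      _ ≤ edist c 0 + edist 0 (pt 1 0) :=
          add_le_add
            (pathDist_le_edist_of_convex (convex_rect _ _ _ _) rect_left_subset_Lshape hc
              (by simp [rect]))
            (pathDist_le_edist_of_convex (convex_rect _ _ _ _) rect_bottom_subset_Lshape
              (by simp [rect]) (by simp [rect]))
      _ = ENNReal.ofReal (‖c‖ + 1) := by
          rw [edist_dist, edist_dist, dist_zero_right, dist_zero_left, ← ENNReal.ofReal_add
            (norm_nonneg _) (norm_nonneg _)]
          simp [norm_pt]
  have h₂ : pathDist Lshape c (pt 0 1) ≤ ENNReal.ofReal (dist c (pt 0 1)) :=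
    edist_dist c _ ▸ pathDist_le_edist_of_convex (convex_rect _ _ _ _) rect_left_subset_Lshape hc
      (by simp [rect])
  have h₃ : pathDist Lshape c (-pt 1 0) ≤ ENNReal.ofReal (dist c (-pt 1 0)) :=
    edist_dist c _ ▸ pathDist_le_edist_of_convex (convex_rect _ _ _ _) rect_left_subset_Lshape hc
      (by simp [rect, neg_pt])
  calc frechetSum c ≤ ENNReal.ofReal (‖c‖ + 1) ^ 2 + ENNReal.ofReal (dist c (pt 0 1)) ^ 2 +
        ENNReal.ofReal (dist c (-pt 1 0)) ^ 2 := by unfold frechetSum; gcongr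
    _ = ENNReal.ofReal ((‖c‖ + 1) ^ 2 + dist c (pt 0 1) ^ 2 + dist c (-pt 1 0) ^ 2) :=
        (ENNReal.ofReal_sq_add_sq_add_sq (by positivity) dist_nonneg dist_nonneg).symm
    _ = ENNReal.ofReal (3 - 6 * α ^ 2) := by
        rw [hc₀, dist_sq_eq_fin_two, dist_sq_eq_fin_two, neg_pt]
        simp only [c, frechetMean, pt_apply_zero, pt_apply_one]
        congr 1
        linear_combination α ^ 2 * Real.sq_sqrt zero_le_two - 2 * α * hsqrt

theorem three_le_dist_sq_add {x : ℝ²} (hx : x 1 ≤ 0) :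
    3 ≤ dist x (pt 1 0) ^ 2 + dist x (pt 0 1) ^ 2 + dist x (-pt 1 0) ^ 2 := by
  simp only [dist_sq_eq_fin_two, neg_pt, pt_apply_zero, pt_apply_one]
  nlinarith [sq_nonneg (x 0), sq_nonneg (x 1)]

theorem lt_norm_add_one_sq_add {x : ℝ²} (hx : x ≠ frechetMean) :
    3 - 6 * frechetCoord ^ 2 < (‖x‖ + 1) ^ 2 + dist x (pt 0 1) ^ 2 + dist x (-pt 1 0) ^ 2 := by
  set α := frechetCoord
  have hnorm := norm_sq_eq_fin_two x
  have hdiag : (2 - 6 * α) * (x 1 - x 0) ≤ 2 * ‖x‖ := by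
    refine (abs_le_of_sq_le_sq' ?_ (by positivity)).2
    rw [two_sub_six_mul_frechetCoord, mul_pow, mul_pow, Real.sq_sqrt zero_le_two, hnorm]
    nlinarith [sq_nonneg (x 0 + x 1)]
  have hne : 0 < (x 0 + x 1) ^ 2 + (x 1 - x 0 - 2 * α) ^ 2 := by
    refine lt_of_le_of_ne (by positivity) fun h => hx ?_
    have h₀ : x 0 + x 1 = 0 := by nlinarith [sq_nonneg (x 0 + x 1), sq_nonneg (x 1 - x 0 - 2 * α)]
    have h₁ : x 1 - x 0 - 2 * α = 0 := by
      nlinarith [sq_nonneg (x 0 + x 1), sq_nonneg (x 1 - x 0 - 2 * α)]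
    ext i; fin_cases i <;> simp [frechetMean] <;> linarith
  rw [dist_sq_eq_fin_two, dist_sq_eq_fin_two, neg_pt]
  simp only [pt_apply_zero, pt_apply_one]
  nlinarith

theorem ofReal_lt_frechetSum {x : ℝ²} (hx : x ∈ Lshape) (hxc : x ≠ frechetMean) :
    ENNReal.ofReal (3 - 6 * frechetCoord ^ 2) < frechetSum x := by
  have hdist (y : ℝ²) : ENNReal.ofReal (dist x y) ≤ pathDist Lshape x y :=
    edist_dist x y ▸ edist_le_pathDist
  rcases le_or_gt (x 1) 0 with hx₁ | hx₁
  · calc ENNReal.ofReal (3 - 6 * frechetCoord ^ 2) < ENNReal.ofReal 3 :=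
          (ENNReal.ofReal_lt_ofReal_iff three_pos).2 (by nlinarith [frechetCoord_pos])
      _ ≤ ENNReal.ofReal (dist x (pt 1 0) ^ 2 + dist x (pt 0 1) ^ 2 + dist x (-pt 1 0) ^ 2) :=
          ENNReal.ofReal_le_ofReal (three_le_dist_sq_add hx₁)
      _ ≤ frechetSum x := by
          rw [ENNReal.ofReal_sq_add_sq_add_sq dist_nonneg dist_nonneg dist_nonneg]
          unfold frechetSum
          gcongr <;> exact hdist _
  · have hx₀ : x 0 ≤ 0 := hx.2.2.resolve_right hx₁.not_ge
    have h₁ : ENNReal.ofReal (‖x‖ + 1) ≤ pathDist Lshape x (pt 1 0) := by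
      simpa using ofReal_norm_add_le_pathDist (fun p hp => hp.2.2) hx₀ hx₁.le (y := pt 1 0)
        (by simp)
    calc ENNReal.ofReal (3 - 6 * frechetCoord ^ 2)
        < ENNReal.ofReal ((‖x‖ + 1) ^ 2 + dist x (pt 0 1) ^ 2 + dist x (-pt 1 0) ^ 2) :=
          (ENNReal.ofReal_lt_ofReal_iff (by positivity)).2 (lt_norm_add_one_sq_add hxc)
      _ ≤ frechetSum x := by
          rw [ENNReal.ofReal_sq_add_sq_add_sq (by positivity) dist_nonneg dist_nonneg]
          unfold frechetSum
          gcongr <;> first | exact h₁ | exact hdist _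

end

theorem stmt_11 :
    let X : Set (EuclideanSpace ℝ (Fin 2)) :=
      {p | |p 0| ≤ 1 ∧ |p 1| ≤ 1 ∧ (p 0 ≤ 0 ∨ p 1 ≤ 0)}
    let e₁ : EuclideanSpace ℝ (Fin 2) := WithLp.toLp 2 (fun i => if i = 0 then 1 else 0)
    let e₂ : EuclideanSpace ℝ (Fin 2) := WithLp.toLp 2 (fun i => if i = 0 then 0 else 1)
    let α : ℝ := (2 - Real.sqrt 2) / 6
    let c : EuclideanSpace ℝ (Fin 2) := WithLp.toLp 2 (fun i => if i = 0 then -α else α)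
    let m : EuclideanSpace ℝ (Fin 2) → ℝ≥0∞ := fun x =>
      pathDist X x e₁ ^ 2 + pathDist X x e₂ ^ 2 + pathDist X x (-e₁) ^ 2
    ∀ x ∈ X, x ≠ c → m c < m x := by
  intro X e₁ e₂ α c m x hx hxc
  exact frechetSum_frechetMean_le.trans_lt (ofReal_lt_frechetSum hx hxc)
end

section
/- On the square P₁ = [−1,0]×[0,1] ⊆ ℝ², the function g(x) = (1+‖x‖)² + ‖x−(0,1)‖² + ‖x−(−1,0)‖² attains its unique minimum at the point (−α, α) with α = (2−√2)/6. -/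
/-!
Expanding the squares gives `g x = 3 + 3‖x‖² + 2‖x‖ - 2⟪x, u⟫` with `u = e₂ - e₁`, `‖u‖ = √2`.
With `r = ‖x‖` and `r₀ = (√2 - 1) / 3`, the minimizer of `3r² + 2r - 2√2 r`, this yields
`g x - g c = 3 (r - r₀)² + 2 (√2 r - ⟪x, u⟫)`. Both terms are nonnegative, the second by
Cauchy–Schwarz, and they vanish together only at `x = r₀ u / √2 = c`. So `c` is the unique
minimizer of `g` on the whole plane, and it lies in `P₁`.
-/

open RealInnerProductSpace

section InnerProductSpace

variable {E : Type*} [NormedAddCommGroup E] [InnerProductSpace ℝ E]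

theorem one_add_norm_sq_add_norm_sub_sq_add_norm_sub_sq {p q : E} (hp : ‖p‖ = 1) (hq : ‖q‖ = 1)
    (x : E) :
    (1 + ‖x‖) ^ 2 + ‖x - p‖ ^ 2 + ‖x - q‖ ^ 2 = 3 + (3 * ‖x‖ ^ 2 + 2 * ‖x‖ - 2 * ⟪x, p + q⟫) := by
  rw [norm_sub_sq_real, norm_sub_sq_real, hp, hq, inner_add_right]
  ring

theorem three_mul_norm_sq_add_two_mul_norm_sub_inner_lt {u x₀ x : E} (hu : 1 ≤ ‖u‖)
    (hx₀ : x₀ = ((‖u‖ - 1) / (3 * ‖u‖)) • u) (hx : x ≠ x₀) :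
    3 * ‖x₀‖ ^ 2 + 2 * ‖x₀‖ - 2 * ⟪x₀, u⟫ < 3 * ‖x‖ ^ 2 + 2 * ‖x‖ - 2 * ⟪x, u⟫ := by
  set r₀ := (‖u‖ - 1) / 3
  have hu₀ : 0 < ‖u‖ := by linarith
  have hr₀ : 0 ≤ r₀ := by simp only [r₀]; linarith
  have hx₀u : (‖u‖ - 1) / (3 * ‖u‖) = r₀ / ‖u‖ := by simp only [r₀]; field_simp
  have hnorm_x₀ : ‖x₀‖ = r₀ := by
    rw [hx₀, hx₀u]
    simp only [norm_smul, Real.norm_eq_abs, abs_div, abs_of_nonneg hr₀, abs_norm]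
    field_simp
  have hinner_x₀ : ⟪x₀, u⟫ = r₀ * ‖u‖ := by
    rw [hx₀, hx₀u]
    simp only [real_inner_smul_left, real_inner_self_eq_norm_sq]
    field_simp
  have hcs : ⟪x, u⟫ ≤ ‖x‖ * ‖u‖ := real_inner_le_norm x u
  rw [hnorm_x₀, hinner_x₀]
  have hgap : 3 * ‖x‖ ^ 2 + 2 * ‖x‖ - 2 * ⟪x, u⟫ - (3 * r₀ ^ 2 + 2 * r₀ - 2 * (r₀ * ‖u‖))
      = 3 * (‖x‖ - r₀) ^ 2 + 2 * (‖x‖ * ‖u‖ - ⟪x, u⟫) := by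
    simp only [r₀]; ring
  by_contra! hle
  have hsq : (‖x‖ - r₀) ^ 2 = 0 := le_antisymm (by linarith) (sq_nonneg _)
  have hr : ‖x‖ = r₀ := sub_eq_zero.mp (pow_eq_zero_iff two_ne_zero |>.mp hsq)
  have heq : ⟪x, u⟫ = ‖x‖ * ‖u‖ := le_antisymm hcs (by linarith)
  apply hx
  rw [hx₀, hx₀u, ← hr, div_eq_inv_mul, mul_smul, ← inner_eq_norm_mul_iff_real.mp heq, smul_smul,
    inv_mul_cancel₀ hu₀.ne', one_smul]

end InnerProductSpace

theorem EuclideanSpace.norm_fin_two (y : EuclideanSpace ℝ (Fin 2)) :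
    ‖y‖ = √(y 0 ^ 2 + y 1 ^ 2) := by
  simp [EuclideanSpace.norm_eq, Fin.sum_univ_two]

theorem stmt_12 :
    let P₁ : Set (EuclideanSpace ℝ (Fin 2)) :=
      {x | x 0 ∈ Set.Icc (-1:ℝ) 0 ∧ x 1 ∈ Set.Icc (0:ℝ) 1}
    let e₁ : EuclideanSpace ℝ (Fin 2) := WithLp.toLp 2 (fun i => if i = 0 then 1 else 0)
    let e₂ : EuclideanSpace ℝ (Fin 2) := WithLp.toLp 2 (fun i => if i = 0 then 0 else 1)
    let α : ℝ := (2 - Real.sqrt 2) / 6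
    let c : EuclideanSpace ℝ (Fin 2) := WithLp.toLp 2 (fun i => if i = 0 then -α else α)
    let g : EuclideanSpace ℝ (Fin 2) → ℝ := fun x =>
      (1 + ‖x‖) ^ 2 + ‖x - e₂‖ ^ 2 + ‖x + e₁‖ ^ 2
    c ∈ P₁ ∧ ∀ x ∈ P₁, x ≠ c → g c < g x := by
  intro P₁ e₁ e₂ α c g
  have hs : √2 ^ 2 = 2 := Real.sq_sqrt zero_le_two
  have he₁ : ‖-e₁‖ = 1 := by simp [EuclideanSpace.norm_fin_two, e₁]
  have he₂ : ‖e₂‖ = 1 := by simp [EuclideanSpace.norm_fin_two, e₂]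
  have hu : ‖e₂ + -e₁‖ = √2 := by
    simp [EuclideanSpace.norm_fin_two, e₁, e₂, one_add_one_eq_two]
  have hc : c = ((‖e₂ + -e₁‖ - 1) / (3 * ‖e₂ + -e₁‖)) • (e₂ + -e₁) := by
    ext i
    fin_cases i <;> simp [c, e₁, e₂, hu, α] <;> field_simp <;> nlinarith
  have hg (x) : g x = 3 + (3 * ‖x‖ ^ 2 + 2 * ‖x‖ - 2 * ⟪x, e₂ + -e₁⟫) := by
    rw [← one_add_norm_sq_add_norm_sub_sq_add_norm_sub_sq he₂ he₁, sub_neg_eq_add]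
  refine ⟨?_, fun x _ hxc => ?_⟩
  · have hα : 0 ≤ α ∧ α ≤ 1 := by
      simp only [α]; constructor <;> nlinarith
    refine ⟨⟨?_, ?_⟩, ?_, ?_⟩ <;> simp [c] <;> linarith
  · rw [hg, hg]
    have := three_mul_norm_sq_add_two_mul_norm_sub_inner_lt (hu ▸ Real.one_lt_sqrt_two.le) hc hxc
    linarith
end
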